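/- arXiv:1403.4172 — 11 statements merged into one kernel-verified Lean document; each statement's English description precedes it below -/
import Mathlib

section
/- Let P be a poset with least element 0 and let I, Z ⊆ P be subsets such that both I and Z are Z-complete and Z is Z-central. Then I ∩ Z is a complete ideal of the subposet Z and an upper complete sublattice of P. -/
/-- `S` is `Z`-disjoint: there is `f : S → Z` with `p ≤ f p` and `f p ∧ f q = 0`
for distinct `p, q ∈ S`. -/
def ZDisjoint {β : Type*} [PartialOrder β] [OrderBot β] (Z S : Set β) : Prop :=
  ∃ f : β → β, (∀ p ∈ S, f p ∈ Z ∧ p ≤ f p) ∧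
    ∀ p ∈ S, ∀ q ∈ S, p ≠ q → Disjoint (f p) (f q)

/-- `I` is `Z`-complete: every `Z`-disjoint `S ⊆ I` has a supremum lying in `I`, and
whenever `{p, q}` is `Z`-disjoint with supremum in `I`, both `p` and `q` lie in `I`. -/
def ZComplete {β : Type*} [PartialOrder β] [OrderBot β] (Z I : Set β) : Prop :=
  (∀ S ⊆ I, ZDisjoint Z S → ∃ s, IsLUB S s ∧ s ∈ I) ∧
  (∀ p q s, ZDisjoint Z {p, q} → IsLUB {p, q} s → s ∈ I → p ∈ I ∧ q ∈ I)

/-- `Z` is `S`-central: for every `p ∈ S` and `y ∈ Z` there is `z ∈ Z` with `y ∧ z = 0`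
and `p` the supremum of some `q ≤ y` and `r ≤ z`. -/
def SCentral {β : Type*} [PartialOrder β] [OrderBot β] (Z S : Set β) : Prop :=
  ∀ p ∈ S, ∀ y ∈ Z, ∃ z ∈ Z, Disjoint y z ∧ ∃ q r, q ≤ y ∧ r ≤ z ∧ IsLUB {q, r} p

/-!
If `p ≤ q` with `p ∈ Z` and `q ∈ I ∩ Z`, centrality splits `q` as `a ∨ b` with `a ≤ p` and
`b` under an element disjoint from `p`, so `q = p ∨ b` is a `Z`-disjoint join and `p ∈ I`.
For suprema of `S ⊆ I ∩ Z`, take by Zorn a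
maximal pairwise disjoint family `D` of elements of `I ∩ Z` below members of `S`; it is
`Z`-disjoint, so `s = ⋁ D` exists in `I ∩ Z`. Splitting `p ∈ S` as `a ∨ b` with `a ≤ s` and
`b` disjoint from `s`, maximality of `D` forces `b = 0`, hence `p ≤ s`.
-/

lemma exists_maximal_pairwise_subset {β : Type*} (r : β → β → Prop) (T : Set β) :
    ∃ D, Maximal (· ∈ {D | D ⊆ T ∧ D.Pairwise r}) D :=
  zorn_subset _ fun c hc hchain =>
    ⟨⋃₀ c, ⟨Set.sUnion_subset fun _ hD => (hc hD).1,
      hchain.pairwise_sUnion.2 fun _ hD => (hc hD).2⟩, fun _ => Set.subset_sUnion_of_mem⟩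

lemma IsLUB.pair_of_le {α : Type*} [Preorder α] {a b p q : α} (h : IsLUB {a, b} q)
    (hap : a ≤ p) (hpq : p ≤ q) : IsLUB {p, b} q := by
  simp only [IsLUB, IsLeast, lowerBounds, upperBounds_insert, upperBounds_singleton,
    Set.mem_inter_iff, Set.mem_Ici, Set.mem_ofPred_eq] at h ⊢
  exact ⟨⟨hpq, h.1.2⟩, fun u hu => h.2 ⟨hap.trans hu.1, hu.2⟩⟩

section

variable {α : Type*} [PartialOrder α] [OrderBot α] {I Z S T D : Set α} {a b p q s y z : α}

lemma ZDisjoint.pair (hy : y ∈ Z) (hz : z ∈ Z) (hpy : p ≤ y) (hqz : q ≤ z)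
    (hyz : Disjoint y z) : ZDisjoint Z {p, q} := by
  classical
  refine ⟨fun x => if x = p then y else z, ?_, ?_⟩
  · rintro x (rfl | rfl)
    · simp [hy, hpy]
    · by_cases h : x = p
      · subst h; simp [hy, hpy]
      · simp [h, hz, hqz]
  · rintro x (rfl | rfl) w (rfl | rfl) hne
    · exact absurd rfl hne
    · simpa [Ne.symm hne] using hyz
    · simpa [hne] using hyz.symm
    · exact absurd rfl hne

lemma ZDisjoint.of_pairwise_disjoint (hDZ : D ⊆ Z) (hD : D.Pairwise Disjoint) :
    ZDisjoint Z D :=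
  ⟨id, fun _ hd => ⟨hDZ hd, le_rfl⟩, fun _ hd _ he hne => hD hd he hne⟩

lemma ZComplete.mem_of_le (hI : ZComplete Z I) (hcen : SCentral Z S) (hqS : q ∈ S)
    (hqI : q ∈ I) (hpZ : p ∈ Z) (hpq : p ≤ q) : p ∈ I := by
  obtain ⟨z, hzZ, hpz, a, b, hap, hbz, hq⟩ := hcen q hqS p hpZ
  exact (hI.2 p b q (.pair hpZ hzZ le_rfl hbz hpz) (hq.pair_of_le hap hpq) hqI).1

lemma le_of_maximal_pairwise_disjoint (hZ : ZComplete Z Z) (hcen : SCentral Z T)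
    (hTZ : T ⊆ Z) (hTlow : ∀ q ∈ T, ∀ b ∈ Z, b ≤ q → b ∈ T)
    (hD : Maximal (· ∈ {D | D ⊆ T ∧ D.Pairwise Disjoint}) D) (hs : IsLUB D s) (hsZ : s ∈ Z)
    (hp : p ∈ T) : p ≤ s := by
  obtain ⟨z, hzZ, hsz, a, b, has, hbz, hab⟩ := hcen p hp s hsZ
  have hbZ : b ∈ Z := (hZ.2 a b p (.pair hsZ hzZ has hbz hsz) hab (hTZ hp)).2
  have hbT : b ∈ T := hTlow p hp b hbZ (hab.1 (Set.mem_insert_of_mem a rfl))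
  have hbD : b ∈ D := by
    refine hD.mem_of_prop_insert ⟨Set.insert_subset hbT hD.prop.1, hD.prop.2.insert ?_⟩
    intro d hd _
    have hbd : Disjoint b d := (hsz.mono (hs.1 hd) hbz).symm
    exact ⟨hbd, hbd.symm⟩
  obtain rfl : b = ⊥ := le_bot_iff.1 (hsz (hs.1 hbD) hbz)
  have ha : IsLUB {a, ⊥} a := by
    simpa [IsLUB, upperBounds_insert] using (isLUB_singleton : IsLUB {a} a)
  exact (hab.unique ha).le.trans has

lemma exists_isLUB_mem_inter (hI : ZComplete Z I) (hZ : ZComplete Z Z) (hcen : SCentral Z Z)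
    (hS : S ⊆ I ∩ Z) : ∃ s, IsLUB S s ∧ s ∈ I ∩ Z := by
  set T := {d | d ∈ I ∩ Z ∧ ∃ p ∈ S, d ≤ p}
  have hTZ : T ⊆ Z := fun d hd => hd.1.2
  have hTlow : ∀ q ∈ T, ∀ b ∈ Z, b ≤ q → b ∈ T :=
    fun q ⟨⟨hqI, hqZ⟩, p, hp, hqp⟩ b hbZ hbq =>
      ⟨⟨hI.mem_of_le hcen hqZ hqI hbZ hbq, hbZ⟩, p, hp, hbq.trans hqp⟩
  obtain ⟨D, hD⟩ := exists_maximal_pairwise_subset Disjoint T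
  have hDZ : D ⊆ Z := hD.prop.1.trans hTZ
  have hDdisj : ZDisjoint Z D := .of_pairwise_disjoint hDZ hD.prop.2
  obtain ⟨s, hs, hsI⟩ := hI.1 D (fun d hd => (hD.prop.1 hd).1.1) hDdisj
  obtain ⟨s', hs', hs'Z⟩ := hZ.1 D hDZ hDdisj
  have hsZ : s ∈ Z := hs'.unique hs ▸ hs'Z
  refine ⟨s, ⟨fun p hp => ?_, fun u hu => hs.2 fun d hd => ?_⟩, hsI, hsZ⟩
  · exact le_of_maximal_pairwise_disjoint hZ (fun p hp => hcen p (hTZ hp)) hTZ hTlow hD hs hsZ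
      ⟨hS hp, p, hp, le_rfl⟩
  · obtain ⟨p, hp, hdp⟩ := (hD.prop.1 hd).2
    exact hdp.trans (hu hp)

end

/-- If `I` and `Z` are `Z`-complete and `Z` is `Z`-central then `I ∩ Z` is a complete
ideal of the subposet `Z` (a lower set in `Z` that is completely upwards directed)
and an upper complete sublattice of `P`. -/
theorem stmt0 {α : Type*} [PartialOrder α] [OrderBot α] (I Z : Set α)
    (hI : ZComplete Z I) (hZ : ZComplete Z Z) (hcen : SCentral Z Z) :
    ((∀ p ∈ Z, ∀ q ∈ I ∩ Z, p ≤ q → p ∈ I ∩ Z) ∧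
      (∀ S ⊆ I ∩ Z, ∃ q ∈ I ∩ Z, ∀ p ∈ S, p ≤ q)) ∧
    (∀ S ⊆ I ∩ Z, ∃ s, IsLUB S s ∧ s ∈ I ∩ Z) := by
  have hsup := fun S (hS : S ⊆ I ∩ Z) => exists_isLUB_mem_inter hI hZ hcen hS
  have hlower : ∀ p ∈ Z, ∀ q ∈ I ∩ Z, p ≤ q → p ∈ I ∩ Z :=
    fun p hpZ q hq hpq => ⟨hI.mem_of_le hcen hq.2 hq.1 hpZ hpq, hpZ⟩
  refine ⟨⟨hlower, fun S hS => ?_⟩, hsup⟩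
  obtain ⟨s, hs, hsIZ⟩ := hsup S hS
  exact ⟨s, hsIZ, hs.1⟩
end

section
/- Let P be a poset with least element 0 and let I, Z ⊆ P be subsets such that both I and Z are Z-complete and Z is Z-central. Then I ∩ Z has a greatest element z (equal to the supremum of I ∩ Z in P, which lies in I ∩ Z), and z is the unique element of Z such that for every y ∈ Z: y∧z = 0 if and only if the only element of I ∩ Z lying below y is 0. -/
/-!
By Zorn's lemma take a maximal pairwise disjoint family `S` in `K = I ∩ Z`; it is `Z`-disjoint,
so its supremum `s` lies in `K`. Centrality splits any `w ∈ K` as `w = q ∨ r` with `q ≤ s` and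
`r` below an element of `Z` disjoint from `s`, and `Z`-completeness puts `q, r` in `K`; then `r`
is disjoint from `S`, so maximality forces `r = 0` and `w ≤ s`. The same splitting against an
arbitrary `y ∈ Z` characterises `s` by disjointness, and against a competitor `z'` gives
`s ≤ z' ≤ s`.
-/

theorem Set.exists_maximal_pairwise {β : Type*} (K : Set β) (r : β → β → Prop) :
    ∃ S, Maximal (fun T => T ⊆ K ∧ T.Pairwise r) S := by
  refine zorn_subset _ fun c hc hchain =>
    ⟨⋃₀ c, ⟨?_, ?_⟩, fun _ ht => Set.subset_sUnion_of_mem ht⟩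
  · rintro x ⟨t, htc, hxt⟩
    exact (hc htc).1 hxt
  · rintro x ⟨t, htc, hxt⟩ y ⟨u, huc, hyu⟩ hxy
    rcases hchain.total htc huc with h | h
    · exact (hc huc).2 (h hxt) hyu hxy
    · exact (hc htc).2 hxt (h hyu) hxy

section

variable {α : Type*} [PartialOrder α] [OrderBot α] {Z I J K S : Set α}

theorem IsLUB.le_of_pair_bot {p q : α} (h : IsLUB {q, ⊥} p) : p ≤ q :=
  h.2 (by rintro x (rfl | rfl) <;> simp)

theorem zDisjoint_of_pairwise_disjoint (hSZ : S ⊆ Z) (hS : S.Pairwise Disjoint) :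
    ZDisjoint Z S :=
  ⟨id, fun _ hp => ⟨hSZ hp, le_rfl⟩, fun _ hp _ hq hpq => hS hp hq hpq⟩

theorem zDisjoint_pair {y z q r : α} (hy : y ∈ Z) (hz : z ∈ Z) (hyz : Disjoint y z)
    (hq : q ≤ y) (hr : r ≤ z) : ZDisjoint Z {q, r} := by
  classical
  by_cases hqr : q = r
  · subst hqr
    exact ⟨fun _ => y, by simp [hy, hq], by simp⟩
  refine ⟨fun x => if x = q then y else z, ?_, ?_⟩
  · rintro p (rfl | rfl)
    · simp [hy, hq]
    · simp [Ne.symm hqr, hz, hr]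
  · rintro _ (rfl | rfl) _ (rfl | rfl) hne
    · exact absurd rfl hne
    · simpa [Ne.symm hqr] using hyz
    · simpa [Ne.symm hqr] using hyz.symm
    · exact absurd rfl hne

theorem ZComplete.inter (hI : ZComplete Z I) (hJ : ZComplete Z J) : ZComplete Z (I ∩ J) := by
  refine ⟨fun S hS hSZ => ?_, fun p q s hpq hs hsIJ => ?_⟩
  · obtain ⟨s, hs, hsI⟩ := hI.1 S (fun _ hx => (hS hx).1) hSZ
    obtain ⟨s', hs', hs'J⟩ := hJ.1 S (fun _ hx => (hS hx).2) hSZ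
    exact ⟨s, hs, hsI, hs.unique hs' ▸ hs'J⟩
  · obtain ⟨hpI, hqI⟩ := hI.2 p q s hpq hs hsIJ.1
    obtain ⟨hpJ, hqJ⟩ := hJ.2 p q s hpq hs hsIJ.2
    exact ⟨⟨hpI, hpJ⟩, ⟨hqI, hqJ⟩⟩

theorem SCentral.exists_split (hcen : SCentral Z S) (hK : ZComplete Z K) {p y : α}
    (hpS : p ∈ S) (hpK : p ∈ K) (hy : y ∈ Z) :
    ∃ z ∈ Z, Disjoint y z ∧ ∃ q ∈ K, ∃ r ∈ K, q ≤ y ∧ r ≤ z ∧ IsLUB {q, r} p := by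
  obtain ⟨z, hz, hyz, q, r, hq, hr, hp⟩ := hcen p hpS y hy
  obtain ⟨hqK, hrK⟩ := hK.2 q r p (zDisjoint_pair hy hz hyz hq hr) hp hpK
  exact ⟨z, hz, hyz, q, hqK, r, hrK, hq, hr, hp⟩

theorem exists_isGreatest_of_zComplete (hKZ : K ⊆ Z) (hK : ZComplete Z K)
    (hcen : SCentral Z Z) : ∃ s, IsGreatest K s := by
  obtain ⟨S, hSmax⟩ := K.exists_maximal_pairwise Disjoint
  obtain ⟨hSK, hS⟩ := hSmax.prop
  obtain ⟨s, hs, hsK⟩ := hK.1 S hSK (zDisjoint_of_pairwise_disjoint (hSK.trans hKZ) hS)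
  refine ⟨s, hsK, fun w hwK => ?_⟩
  obtain ⟨z, -, hsz, q, -, r, hrK, hq, hr, hw⟩ := hcen.exists_split hK (hKZ hwK) hwK (hKZ hsK)
  have hrS : r ∈ S := by
    have hrdisj : ∀ x ∈ S, Disjoint r x := fun x hx => (hsz.mono (hs.1 hx) hr).symm
    have hins : insert r S ⊆ K ∧ (insert r S).Pairwise Disjoint :=
      ⟨Set.insert_subset hrK hSK,
        Set.pairwise_insert_of_symm.mpr ⟨hS, fun x hx _ => hrdisj x hx⟩⟩
    exact hSmax.2 hins (Set.subset_insert r S) (Set.mem_insert r S)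
  have hr_bot : r = ⊥ := le_bot_iff.mp (hsz (hs.1 hrS) hr)
  subst hr_bot
  exact hw.le_of_pair_bot.trans hq

namespace IsGreatest

variable {s : α}

theorem disjoint_iff_forall_le_eq_bot (hs : IsGreatest K s) (hKZ : K ⊆ Z) (hK : ZComplete Z K)
    (hcen : SCentral Z Z) {y : α} (hy : y ∈ Z) :
    Disjoint y s ↔ ∀ w ∈ K, w ≤ y → w = ⊥ := by
  refine ⟨fun hys w hwK hwy => le_bot_iff.mp (hys hwy (hs.2 hwK)), fun hK_y => ?_⟩
  obtain ⟨z, -, hyz, q, hqK, r, -, hq, hr, hqr⟩ := hcen.exists_split hK (hKZ hs.1) hs.1 hy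
  obtain rfl : q = ⊥ := hK_y q hqK hq
  rw [Set.pair_comm] at hqr
  exact hyz.mono_right (hqr.le_of_pair_bot.trans hr)

theorem eq_of_forall_disjoint_iff (hs : IsGreatest K s) (hKZ : K ⊆ Z) (hK : ZComplete Z K)
    (hcen : SCentral Z Z) {z' : α} (hz' : z' ∈ Z)
    (hsep : ∀ y ∈ Z, Disjoint y z' ↔ ∀ w ∈ K, w ≤ y → w = ⊥) : z' = s := by
  have hs_le : s ≤ z' := by
    obtain ⟨z, hz, hz'z, q, -, r, hrK, hq, hr, hqr⟩ := hcen.exists_split hK (hKZ hs.1) hs.1 hz'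
    obtain rfl : r = ⊥ := (hsep z hz).mp hz'z.symm r hrK hr
    exact hqr.le_of_pair_bot.trans hq
  have hle_s : z' ≤ s := by
    obtain ⟨z, hz, hsz, q, r, hq, hr, hqr⟩ := hcen z' hz' s (hKZ hs.1)
    have hzz' : Disjoint z z' :=
      (hsep z hz).mpr ((hs.disjoint_iff_forall_le_eq_bot hKZ hK hcen hz).mp hsz.symm)
    obtain rfl : r = ⊥ := le_bot_iff.mp (hzz' hr (hqr.1 (Set.mem_insert_of_mem _ rfl)))
    exact hqr.le_of_pair_bot.trans hq
  exact le_antisymm hle_s hs_le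

end IsGreatest

end

/-- If `I` and `Z` are `Z`-complete and `Z` is `Z`-central, then `I ∩ Z` has a greatest
element `z` (its supremum in `P`, lying in `I ∩ Z`), and `z` is the unique element of `Z`
such that for all `y ∈ Z`: `y ∧ z = 0` iff the only element of `I ∩ Z` below `y` is `0`. -/
theorem stmt1 {α : Type*} [PartialOrder α] [OrderBot α] (I Z : Set α)
    (hI : ZComplete Z I) (hZ : ZComplete Z Z) (hcen : SCentral Z Z) :
    ∃ z, IsLUB (I ∩ Z) z ∧ z ∈ I ∩ Z ∧
      (∀ y ∈ Z, (Disjoint y z ↔ ∀ w ∈ I ∩ Z, w ≤ y → w = ⊥)) ∧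
      ∀ z' ∈ Z, (∀ y ∈ Z, (Disjoint y z' ↔ ∀ w ∈ I ∩ Z, w ≤ y → w = ⊥)) → z' = z := by
  have hKZ : I ∩ Z ⊆ Z := Set.inter_subset_right
  have hK : ZComplete Z (I ∩ Z) := hI.inter hZ
  obtain ⟨s, hs⟩ := exists_isGreatest_of_zComplete hKZ hK hcen
  exact ⟨s, hs.isLUB, hs.1, fun _ hy => hs.disjoint_iff_forall_le_eq_bot hKZ hK hcen hy,
    fun _ hz' hsep => hs.eq_of_forall_disjoint_iff hKZ hK hcen hz' hsep⟩
end

section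
/- Let P be a poset with least element 0, let Z be a lower complete sublattice of P which is P-central, and let I ⊆ P be Z-complete. Then c_Z I = {c_Z(p) : p ∈ I} has a greatest element z, and z is the unique element of Z such that for every y ∈ Z: y∧z = 0 if and only if the only element of I lying below y is 0. -/
/-- A pair `{q, r}` with `q ≤ y`, `r ≤ z`, `y, z ∈ Z` disjoint, is `Z`-disjoint. -/
lemma pair_zdisjoint {β : Type*} [PartialOrder β] [OrderBot β] {Z : Set β}
    {y z q r : β} (hy : y ∈ Z) (hz : z ∈ Z) (hd : Disjoint y z)
    (hq : q ≤ y) (hr : r ≤ z) : ZDisjoint Z ({q, r} : Set β) := by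
  classical
  refine ⟨fun x => if x = q then y else z, ?_, ?_⟩
  · rintro p (rfl | rfl)
    · simp [hy, hq]
    · by_cases h : p = q
      · subst h; simp [hy, hq]
      · simp [h, hz, hr]
  · rintro a (rfl | rfl) b (rfl | rfl) hne
    · exact absurd rfl hne
    · by_cases h : b = a
      · exact absurd h.symm hne
      · simpa [h] using hd
    · by_cases h : a = b
      · exact absurd h hne
      · simpa [h] using hd.symm
    · exact absurd rfl hne

/-- If `Z` is a lower complete sublattice of `P` which is `P`-central and `I` is
`Z`-complete, then `c_Z I` has a greatest element `z`, and `z` is the unique element of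
`Z` such that for all `y ∈ Z`: `y ∧ z = 0` iff the only element of `I` below `y` is `0`. -/
theorem stmt3 {α : Type*} [PartialOrder α] [OrderBot α] (Z I : Set α) (c : α → α)
    (hZl : ∀ S ⊆ Z, ∃ i, IsGLB S i ∧ i ∈ Z)
    (hc : ∀ p, c p ∈ Z ∧ IsGLB {z | z ∈ Z ∧ p ≤ z} (c p))
    (hcen : SCentral Z Set.univ)
    (hI : ZComplete Z I) :
    ∃ z ∈ c '' I, (∀ w ∈ c '' I, w ≤ z) ∧
      (∀ y ∈ Z, (Disjoint y z ↔ ∀ w ∈ I, w ≤ y → w = ⊥)) ∧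
      ∀ z' ∈ Z, (∀ y ∈ Z, (Disjoint y z' ↔ ∀ w ∈ I, w ≤ y → w = ⊥)) → z' = z := by
  -- basic facts about the cover map `c`
  have hle : ∀ p, p ≤ c p := fun p => (hc p).2.2 fun z hz => hz.2
  have cle : ∀ p z, z ∈ Z → p ≤ z → c p ≤ z := fun p z hz hpz => (hc p).2.1 ⟨hz, hpz⟩
  -- Zorn's lemma: maximal family in I whose covers are pairwise disjoint
  set 𝒮 : Set (Set α) :=
    {S | S ⊆ I ∧ ∀ s ∈ S, ∀ t ∈ S, s ≠ t → Disjoint (c s) (c t)} with h𝒮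
  obtain ⟨S, hSmax⟩ := zorn_subset 𝒮 (by
    intro C hC hchain
    refine ⟨⋃₀ C, ⟨?_, ?_⟩, fun s hs => Set.subset_sUnion_of_mem hs⟩
    · intro x hx
      obtain ⟨A, hA, hxA⟩ := hx
      exact (hC hA).1 hxA
    · intro s hs t ht hne
      obtain ⟨A, hA, hsA⟩ := hs
      obtain ⟨B, hB, htB⟩ := ht
      rcases hchain.total hA hB with h | h
      · exact (hC hB).2 s (h hsA) t htB hne
      · exact (hC hA).2 s hsA t (h htB) hne)
  have hS : S ∈ 𝒮 := hSmax.prop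
  have hSzd : ZDisjoint Z S := ⟨c, fun p _ => ⟨(hc p).1, hle p⟩, hS.2⟩
  obtain ⟨p, hplub, hpI⟩ := hI.1 S hS.1 hSzd
  have hcpZ : c p ∈ Z := (hc p).1
  -- key claim: every element of I lies below c p
  have hall : ∀ w ∈ I, w ≤ c p := by
    intro w hw
    obtain ⟨z, hzZ, hdisj, q, r, hq, hr, hlub⟩ := hcen w trivial (c p) hcpZ
    obtain ⟨hqI, hrI⟩ := hI.2 q r w (pair_zdisjoint hcpZ hzZ hdisj hq hr) hlub hw
    have hrbot : r = ⊥ := by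
      by_contra hne
      have hrS : r ∉ S := by
        intro hrS
        exact hne (le_bot_iff.mp (hdisj ((hplub.1 hrS).trans (hle p)) hr))
      have hins : insert r S ∈ 𝒮 := by
        constructor
        · exact Set.insert_subset hrI hS.1
        · rintro s (rfl | hs) t (rfl | ht) hst
          · exact absurd rfl hst
          · refine hdisj.symm.mono (cle s z hzZ hr) (cle t (c p) hcpZ ?_)
            exact (hplub.1 ht).trans (hle p)
          · refine hdisj.mono (cle s (c p) hcpZ ?_) (cle t z hzZ hr)
            exact (hplub.1 hs).trans (hle p)
          · exact hS.2 s hs t ht hst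
      exact hrS (hSmax.2 hins (Set.subset_insert r S) (Set.mem_insert r S))
    have : w ≤ q := by
      refine hlub.2 ?_
      rintro x (rfl | rfl)
      · exact le_rfl
      · exact hrbot.le.trans bot_le
    exact this.trans hq
  -- the characterization of c p
  have hiff : ∀ y ∈ Z, (Disjoint y (c p) ↔ ∀ w ∈ I, w ≤ y → w = ⊥) := by
    intro y hy
    constructor
    · intro hd w hw hwy
      exact le_bot_iff.mp (hd hwy (hall w hw))
    · intro hnull
      obtain ⟨z, hzZ, hdisj, q, r, hq, hr, hlub⟩ := hcen p trivial y hy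
      obtain ⟨hqI, hrI⟩ := hI.2 q r p (pair_zdisjoint hy hzZ hdisj hq hr) hlub hpI
      have hqbot : q = ⊥ := hnull q hqI hq
      have hpr : p ≤ r := by
        refine hlub.2 ?_
        rintro x (rfl | rfl)
        · exact hqbot.le.trans bot_le
        · exact le_rfl
      exact hdisj.mono_right (cle p z hzZ (hpr.trans hr))
  refine ⟨c p, ⟨p, hpI, rfl⟩, ?_, hiff, ?_⟩
  · rintro w ⟨v, hvI, rfl⟩
    exact cle v (c p) hcpZ (hall v hvI)
  · -- uniqueness
    intro z' hz'Z hz'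
    have le1 : z' ≤ c p := by
      obtain ⟨w, hwZ, hdisj, q, r, hq, hr, hlub⟩ := hcen z' trivial (c p) hcpZ
      have hnull : ∀ u ∈ I, u ≤ w → u = ⊥ := (hiff w hwZ).mp hdisj.symm
      have hdw : Disjoint w z' := (hz' w hwZ).mpr hnull
      have hrbot : r = ⊥ := le_bot_iff.mp (hdw (hr) (hlub.1 (by simp)))
      have : z' ≤ q := by
        refine hlub.2 ?_
        rintro x (rfl | rfl)
        · exact le_rfl
        · exact hrbot.le.trans bot_le
      exact this.trans hq
    have le2 : c p ≤ z' := by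
      obtain ⟨w, hwZ, hdisj, q, r, hq, hr, hlub⟩ := hcen (c p) trivial z' hz'Z
      have hnull : ∀ u ∈ I, u ≤ w → u = ⊥ := (hz' w hwZ).mp hdisj.symm
      have hdw : Disjoint w (c p) := (hiff w hwZ).mpr hnull
      have hrbot : r = ⊥ := le_bot_iff.mp (hdw (hr) (hlub.1 (by simp)))
      have : c p ≤ q := by
        refine hlub.2 ?_
        rintro x (rfl | rfl)
        · exact le_rfl
        · exact hrbot.le.trans bot_le
      exact this.trans hq
    exact le_antisymm le1 le2
end

section
/- Let P be a poset with least element 0 and let Z ⊆ P be P-modular. If I ⊆ P satisfies (1) every Z-disjoint S ⊆ I has a supremum in P which lies in I, and (2′) whenever p ∈ I, z ∈ Z and the infimum p∧z exists in P, then p∧z ∈ I, then I is Z-complete. -/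
/-- `Z` is `P`-modular: disjoint pairs in `Z` are modular pairs, i.e. whenever
`y, z ∈ Z` with `y ∧ z = 0`, `p ≤ y`, `q ≤ z` and `p ∨ q` exists, `q` is the greatest
lower bound of `z` and `p ∨ q`. -/
def PModular {β : Type*} [PartialOrder β] [OrderBot β] (Z : Set β) : Prop :=
  ∀ y ∈ Z, ∀ z ∈ Z, Disjoint y z →
    ∀ p q s, p ≤ y → q ≤ z → IsLUB {p, q} s → IsGLB {z, s} q

namespace PModular

variable {α : Type*} [PartialOrder α] [OrderBot α] {Z : Set α}

/-- For `p = q` the witness `f p ∈ Z` works trivially; otherwise modularity of the disjoint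
pair `f q, f p` makes `p` the meet of `f p` with `p ∨ q`. -/
theorem exists_isGLB_of_isLUB_pair (hmod : PModular Z) {p q s : α}
    (hd : ZDisjoint Z {p, q}) (hs : IsLUB {p, q} s) : ∃ y ∈ Z, IsGLB {s, y} p := by
  obtain ⟨f, hfZ, hf⟩ := hd
  obtain ⟨hpZ, hp⟩ := hfZ p (by simp)
  refine ⟨f p, hpZ, ?_⟩
  rcases eq_or_ne p q with rfl | hpq
  · obtain rfl : p = s := isLUB_singleton.unique (by simpa using hs)
    exact IsLeast.isGLB ⟨Set.mem_insert _ _, by simp [hp]⟩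
  · obtain ⟨hqZ, hq⟩ := hfZ q (by simp)
    rw [Set.pair_comm]
    exact hmod (f q) hqZ (f p) hpZ (hf q (by simp) p (by simp) hpq.symm) q p s hq hp
      (by rwa [Set.pair_comm])

theorem mem_of_isLUB_pair (hmod : PModular Z) {I : Set α}
    (hI : ∀ p ∈ I, ∀ z ∈ Z, ∀ w, IsGLB {p, z} w → w ∈ I) {p q s : α}
    (hd : ZDisjoint Z {p, q}) (hs : IsLUB {p, q} s) (hsI : s ∈ I) : p ∈ I :=
  let ⟨y, hy, hglb⟩ := hmod.exists_isGLB_of_isLUB_pair hd hs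
  hI s hsI y hy p hglb

end PModular

/-- If `Z` is `P`-modular and `I` satisfies (1) every `Z`-disjoint `S ⊆ I` has a
supremum lying in `I` and (2′) `p ∧ z ∈ I` whenever `p ∈ I`, `z ∈ Z` and `p ∧ z`
exists, then `I` is `Z`-complete. -/
theorem stmt4 {α : Type*} [PartialOrder α] [OrderBot α] (Z I : Set α)
    (hmod : PModular Z)
    (h1 : ∀ S ⊆ I, ZDisjoint Z S → ∃ s, IsLUB S s ∧ s ∈ I)
    (h2 : ∀ p ∈ I, ∀ z ∈ Z, ∀ w, IsGLB {p, z} w → w ∈ I) :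
    ZComplete Z I := by
  refine ⟨h1, fun p q s hd hs hsI => ⟨hmod.mem_of_isLUB_pair h2 hd hs hsI, ?_⟩⟩
  rw [Set.pair_comm] at hd hs
  exact hmod.mem_of_isLUB_pair h2 hd hs hsI
end

section
/- Let P be a poset with least element 0 and let Z ⊆ P be P-modular and P-central. If I ⊆ P is Z-complete, then for every p ∈ I and z ∈ Z the infimum p∧z exists in P and lies in I. -/
theorem zDisjoint_pair_s5 {β : Type*} [PartialOrder β] [OrderBot β] {Z : Set β} {y z p q : β}
    (hy : y ∈ Z) (hz : z ∈ Z) (hyz : Disjoint y z) (hpy : p ≤ y) (hqz : q ≤ z) :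
    ZDisjoint Z {p, q} := by
  classical
  refine ⟨fun x => if x = p then y else z, ?_, ?_⟩
  · rintro x (rfl | rfl)
    · simp [hy, hpy]
    · dsimp only
      split_ifs with h
      · exact ⟨hy, h ▸ hpy⟩
      · exact ⟨hz, hqz⟩
  · rintro a (rfl | rfl) b (rfl | rfl) hne
    · exact absurd rfl hne
    · simp [Ne.symm hne, hyz]
    · simp [hne, hyz.symm]
    · exact absurd rfl hne

theorem PModular.isGLB_of_isLUB {β : Type*} [PartialOrder β] [OrderBot β] {Z : Set β}
    (hmod : PModular Z) {z z' p q r : β} (hz : z ∈ Z) (hz' : z' ∈ Z) (hzz' : Disjoint z z')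
    (hqz : q ≤ z) (hrz' : r ≤ z') (hp : IsLUB {q, r} p) : IsGLB {p, z} q := by
  rw [Set.pair_comm] at hp ⊢
  exact hmod z' hz' z hz hzz'.symm r q p hrz' hqz hp

/-- If `Z` is `P`-modular and `P`-central and `I` is `Z`-complete, then for every
`p ∈ I` and `z ∈ Z` the infimum `p ∧ z` exists in `P` and lies in `I`. -/
theorem stmt5 {α : Type*} [PartialOrder α] [OrderBot α] (Z I : Set α)
    (hmod : PModular Z) (hcen : SCentral Z Set.univ) (hI : ZComplete Z I) :
    ∀ p ∈ I, ∀ z ∈ Z, ∃ w, IsGLB {p, z} w ∧ w ∈ I := by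
  intro p hp z hz
  obtain ⟨z', hz', hzz', q, r, hqz, hrz', hpqr⟩ := hcen p (Set.mem_univ p) z hz
  refine ⟨q, hmod.isGLB_of_isLUB hz hz' hzz' hqz hrz' hpqr, ?_⟩
  exact (hI.2 q r p (zDisjoint_pair_s5 hz hz' hzz' hqz hrz') hpqr hp).1
end

section
/- Let P be a poset with least element 0 which is Z-complete, where Z ⊆ P is pseudocomplemented. Then a subset I ⊆ P is Z-complete if and only if for every Z-disjoint S ⊆ P one has: S ⊆ I if and only if the supremum ⋁S (which exists since P is Z-complete) lies in I. -/
/-!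
If `S` is `Z`-disjoint, witnessed by `f`, and `p ∈ S`, then every `f q` with `q ∈ S \ {p}` lies
below the pseudocomplement `(f p)⊥`, hence so does `t = ⋁ (S \ {p})`. Thus `{p, t}` is
`Z`-disjoint, witnessed by `f p` and `(f p)⊥`, and `p ∨ t = ⋁ S`. The second axiom of
`Z`-completeness applied to this pair takes `⋁ S ∈ I` down to `p ∈ I`.
-/

section ZDisjoint

variable {α : Type*} [PartialOrder α] [OrderBot α] {Z S T : Set α}

theorem ZDisjoint.mono (hT : ZDisjoint Z T) (hST : S ⊆ T) : ZDisjoint Z S :=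
  let ⟨f, hfZ, hfd⟩ := hT
  ⟨f, fun p hp => hfZ p (hST hp), fun p hp q hq => hfd p (hST hp) q (hST hq)⟩

theorem zDisjoint_pair_s6 {p q x y : α} (hx : x ∈ Z) (hy : y ∈ Z) (hpx : p ≤ x) (hqy : q ≤ y)
    (hxy : Disjoint x y) : ZDisjoint Z {p, q} := by
  classical
  refine ⟨fun a => if a = p then x else y, ?_, ?_⟩
  · rintro a (rfl | rfl)
    · simpa using And.intro hx hpx
    · dsimp only
      split_ifs with h
      · exact ⟨hx, h ▸ hpx⟩
      · exact ⟨hy, hqy⟩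
  · rintro a (rfl | rfl) b (rfl | rfl) hab
    · exact absurd rfl hab
    · simpa [Ne.symm hab] using hxy
    · simpa [hab] using hxy.symm
    · exact absurd rfl hab

theorem ZDisjoint.pair_of_isLUB_sdiff
    (hpc : ∀ z ∈ Z, ∃ z' ∈ Z, Disjoint z z' ∧ ∀ y ∈ Z, Disjoint y z → y ≤ z')
    (hS : ZDisjoint Z S) {p t : α} (hp : p ∈ S) (ht : IsLUB (S \ {p}) t) :
    ZDisjoint Z {p, t} := by
  obtain ⟨f, hfZ, hfd⟩ := hS
  obtain ⟨z', hz'Z, hdisj, hz'max⟩ := hpc (f p) (hfZ p hp).1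
  have ht_le : t ≤ z' := ht.2 fun q hq =>
    (hfZ q hq.1).2.trans (hz'max _ (hfZ q hq.1).1 (hfd q hq.1 p hp hq.2))
  exact zDisjoint_pair_s6 (hfZ p hp).1 hz'Z (hfZ p hp).2 ht_le hdisj

end ZDisjoint

theorem isLUB_pair_of_isLUB_sdiff {α : Type*} [Preorder α] {S : Set α} {p s t : α}
    (hs : IsLUB S s) (hp : p ∈ S) (ht : IsLUB (S \ {p}) t) : IsLUB {p, t} s := by
  refine ⟨?_, fun u hu => hs.2 fun q hq => ?_⟩
  · rintro x (rfl | rfl)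
    · exact hs.1 hp
    · exact ht.2 fun q hq => hs.1 hq.1
  · by_cases hqp : q = p
    · exact hqp ▸ hu (Set.mem_insert _ _)
    · exact (ht.1 ⟨hq, hqp⟩).trans (hu (Set.mem_insert_of_mem _ rfl))

section ZComplete

variable {α : Type*} [PartialOrder α] [OrderBot α] {Z I S : Set α}

theorem ZComplete.subset_of_isLUB_mem (hI : ZComplete Z I)
    (hP : ZComplete Z (Set.univ : Set α))
    (hpc : ∀ z ∈ Z, ∃ z' ∈ Z, Disjoint z z' ∧ ∀ y ∈ Z, Disjoint y z → y ≤ z')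
    (hS : ZDisjoint Z S) {s : α} (hs : IsLUB S s) (hsI : s ∈ I) : S ⊆ I := by
  intro p hp
  obtain ⟨t, ht, -⟩ := hP.1 (S \ {p}) (Set.subset_univ _) (hS.mono Set.sdiff_subset)
  exact (hI.2 p t s (hS.pair_of_isLUB_sdiff hpc hp ht) (isLUB_pair_of_isLUB_sdiff hs hp ht) hsI).1

theorem ZComplete.isLUB_mem (hI : ZComplete Z I) (hS : ZDisjoint Z S) (hSI : S ⊆ I) {s : α}
    (hs : IsLUB S s) : s ∈ I := by
  obtain ⟨s', hs', hs'I⟩ := hI.1 S hSI hS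
  rwa [hs.unique hs']

theorem zComplete_of_subset_iff_isLUB_mem (hP : ZComplete Z (Set.univ : Set α))
    (H : ∀ S : Set α, ZDisjoint Z S → ∀ s, IsLUB S s → (S ⊆ I ↔ s ∈ I)) : ZComplete Z I := by
  refine ⟨fun S hSI hS => ?_, fun p q s hpq hs hsI => ?_⟩
  · obtain ⟨s, hs, -⟩ := hP.1 S (Set.subset_univ _) hS
    exact ⟨s, hs, (H S hS s hs).1 hSI⟩
  · have hpqI := (H {p, q} hpq s hs).2 hsI
    exact ⟨hpqI (Set.mem_insert _ _), hpqI (Set.mem_insert_of_mem _ rfl)⟩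

end ZComplete

/-- If `P` is `Z`-complete (as a poset) and `Z` is pseudocomplemented (every `z ∈ Z` has
a pseudocomplement in `Z`: a `z⊥ ∈ Z` disjoint from `z` dominating every `y ∈ Z` disjoint
from `z`), then `I` is `Z`-complete iff for every `Z`-disjoint `S ⊆ P`:
`S ⊆ I` iff `⋁ S ∈ I` (the supremum exists since `P` is `Z`-complete). -/
theorem stmt6 {α : Type*} [PartialOrder α] [OrderBot α] (Z : Set α)
    (hP : ZComplete Z (Set.univ : Set α))
    (hpc : ∀ z ∈ Z, ∃ z' ∈ Z, Disjoint z z' ∧ ∀ y ∈ Z, Disjoint y z → y ≤ z')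
    (I : Set α) :
    ZComplete Z I ↔ ∀ S : Set α, ZDisjoint Z S → ∀ s, IsLUB S s → (S ⊆ I ↔ s ∈ I) :=
  ⟨fun hI _ hS _ hs => ⟨fun hSI => hI.isLUB_mem hS hSI hs, hI.subset_of_isLUB_mem hP hpc hS hs⟩,
    zComplete_of_subset_iff_isLUB_mem hP⟩
end

section
/- Let P be a poset with least element 0 and let Z be a lower complete sublattice of P which is P-central and Z-modular. Then for every p ∈ P and z ∈ Z there exists q ∈ P with q ≤ p, q ≤ z and c_Z(q) = c_Z(p)∧z, where c_Z(p)∧z denotes the infimum in P of c_Z(p) and z (which exists and lies in Z). -/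
/-- `Z` is `Z`-modular: whenever `y, z ∈ Z` with `y ∧ z = 0`, `p, q ∈ Z` with `p ≤ y`,
`q ≤ z` and `p, q` have a least upper bound `s` within the subposet `Z`, then `q` is the
greatest lower bound within `Z` of `z` and `s`. -/
def ZModular {β : Type*} [PartialOrder β] [OrderBot β] (Z : Set β) : Prop :=
  ∀ y ∈ Z, ∀ z ∈ Z, Disjoint y z → ∀ p ∈ Z, ∀ q ∈ Z, p ≤ y → q ≤ z →
    ∀ s ∈ Z, (p ≤ s ∧ q ≤ s ∧ ∀ w ∈ Z, p ≤ w → q ≤ w → s ≤ w) →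
      (q ≤ s ∧ ∀ w ∈ Z, w ≤ z → w ≤ s → w ≤ q)

/-!
Centrality splits `p` as the supremum of `q ≤ z` and `r ≤ z'` with `z ∧ z' = 0`, `z' ∈ Z`.
The cover `c p` is then the supremum within `Z` of `c q ≤ z` and `c r ≤ z'`, so `Z`-modularity
makes `c q` the infimum within `Z` of `z` and `c p`; as `c p ∧ z` lies in `Z`, it equals `c q`.
-/

def IsZCover {α : Type*} [PartialOrder α] (Z : Set α) (c : α → α) : Prop :=
  ∀ p, c p ∈ Z ∧ IsGLB {z | z ∈ Z ∧ p ≤ z} (c p)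

namespace IsZCover

variable {α : Type*} [PartialOrder α] {Z : Set α} {c : α → α}

theorem le_cover (hc : IsZCover Z c) (p : α) : p ≤ c p :=
  (hc p).2.2 fun _ hz => hz.2

theorem cover_le (hc : IsZCover Z c) {p z : α} (hz : z ∈ Z) (hpz : p ≤ z) : c p ≤ z :=
  (hc p).2.1 ⟨hz, hpz⟩

theorem mono (hc : IsZCover Z c) {p q : α} (hpq : p ≤ q) : c p ≤ c q :=
  hc.cover_le (hc q).1 (hpq.trans (hc.le_cover q))

theorem isLUB_pair_in (hc : IsZCover Z c) {p q r : α} (hp : IsLUB {q, r} p) :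
    c r ≤ c p ∧ c q ≤ c p ∧ ∀ w ∈ Z, c r ≤ w → c q ≤ w → c p ≤ w := by
  refine ⟨hc.mono (hp.1 (by simp)), hc.mono (hp.1 (by simp)), fun w hw hrw hqw => ?_⟩
  refine hc.cover_le hw (hp.2 ?_)
  rintro x (rfl | rfl)
  exacts [(hc.le_cover x).trans hqw, (hc.le_cover x).trans hrw]

theorem le_cover_of_le_of_le_cover_sup [OrderBot α] (hc : IsZCover Z c) (hzm : ZModular Z)
    {y y' p q r w : α} (hy : y ∈ Z) (hy' : y' ∈ Z) (hdisj : Disjoint y y')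
    (hqy : q ≤ y) (hry' : r ≤ y') (hp : IsLUB {q, r} p)
    (hw : w ∈ Z) (hwy : w ≤ y) (hwp : w ≤ c p) : w ≤ c q :=
  (hzm y' hy' y hy hdisj.symm (c r) (hc r).1 (c q) (hc q).1 (hc.cover_le hy' hry')
    (hc.cover_le hy hqy) (c p) (hc p).1 (hc.isLUB_pair_in hp)).2 w hw hwy hwp

end IsZCover

/-- If `Z` is a `Z`-modular `P`-central lower complete sublattice of `P` then for all
`p ∈ P` and `z ∈ Z` there is `q ≤ p, z` with `c_Z q = c_Z p ∧ z`, where `c_Z p ∧ z` is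
the infimum in `P` of `c_Z p` and `z`, which exists and lies in `Z`. -/
theorem stmt7 {α : Type*} [PartialOrder α] [OrderBot α] (Z : Set α) (c : α → α)
    (hZl : ∀ S ⊆ Z, ∃ i, IsGLB S i ∧ i ∈ Z)
    (hc : ∀ p, c p ∈ Z ∧ IsGLB {z | z ∈ Z ∧ p ≤ z} (c p))
    (hcen : SCentral Z Set.univ) (hzm : ZModular Z) :
    ∀ p : α, ∀ z ∈ Z, ∃ m, IsGLB {c p, z} m ∧ m ∈ Z ∧
      ∃ q, q ≤ p ∧ q ≤ z ∧ c q = m := by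
  intro p z hz
  have hc : IsZCover Z c := hc
  obtain ⟨m, hm, hmZ⟩ := hZl {c p, z} (Set.pair_subset (hc p).1 hz)
  obtain ⟨z', hz', hdisj, q, r, hqz, hrz', hp⟩ := hcen p (Set.mem_univ p) z hz
  refine ⟨m, hm, hmZ, q, hp.1 (by simp), hqz, le_antisymm ?_ ?_⟩
  · refine hm.2 ?_
    rintro x (rfl | rfl)
    exacts [hc.mono (hp.1 (by simp)), hc.cover_le hz hqz]
  · exact hc.le_cover_of_le_of_le_cover_sup hzm hz hz' hdisj hqz hrz' hp hmZ
      (hm.1 (by simp)) (hm.1 (by simp))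
end

section
/- Let P be a poset with least element 0 and let Z be a lower complete sublattice of P which is P-central and Z-modular. If p ∈ P, z ∈ Z and the infimum p∧z exists in P, then c_Z(p∧z) = c_Z(p)∧z, where c_Z(p)∧z denotes the infimum in P of c_Z(p) and z. -/
/-!
Split `p = q ⊔ r` centrally along `z`, with `q ≤ z`, `r ≤ z'` and `z ∧ z' = 0`. The cover
`c p` is then the supremum within `Z` of `c q ≤ z` and `c r ≤ z'`, so `Z`-modularity shows that
every element of `Z` below both `z` and `c p` lies below `c q`. Since `q ≤ p ∧ z`, this
bounds every common lower bound `v` of `c p` and `z` by `c v ≤ c q ≤ c (p ∧ z)`.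
-/

theorem mem_lowerBounds_pair {α : Type*} [Preorder α] {a b x : α} :
    x ∈ lowerBounds {a, b} ↔ x ≤ a ∧ x ≤ b := by
  simp only [lowerBounds_insert, lowerBounds_singleton, Set.mem_inter_iff, Set.mem_Iic]

theorem mem_upperBounds_pair {α : Type*} [Preorder α] {a b x : α} :
    x ∈ upperBounds {a, b} ↔ a ≤ x ∧ b ≤ x := by
  simp only [upperBounds_insert, upperBounds_singleton, Set.mem_inter_iff, Set.mem_Ici]

section Cover

variable {α : Type*} [PartialOrder α] {Z : Set α} {c : α → α}
  (hc : ∀ p, c p ∈ Z ∧ IsGLB {z | z ∈ Z ∧ p ≤ z} (c p))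
include hc

theorem le_cover (p : α) : p ≤ c p :=
  (hc p).2.2 fun _ hu => hu.2

theorem cover_le {p u : α} (hu : u ∈ Z) (hpu : p ≤ u) : c p ≤ u :=
  (hc p).2.1 ⟨hu, hpu⟩

theorem cover_mono : Monotone c := fun _ q hpq =>
  cover_le hc (hc q).1 (hpq.trans (le_cover hc q))

theorem cover_le_of_isLUB {p q r u : α} (hp : IsLUB {q, r} p) (hu : u ∈ Z)
    (hqu : c q ≤ u) (hru : c r ≤ u) : c p ≤ u :=
  cover_le hc hu <| hp.2 <| mem_upperBounds_pair.2
    ⟨(le_cover hc q).trans hqu, (le_cover hc r).trans hru⟩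

theorem le_cover_of_isLUB_of_disjoint [OrderBot α] (hzm : ZModular Z) {y z p q r v : α} (hy : y ∈ Z)
    (hz : z ∈ Z) (hyz : Disjoint y z) (hry : r ≤ y) (hqz : q ≤ z) (hp : IsLUB {q, r} p)
    (hv : v ∈ Z) (hvz : v ≤ z) (hvp : v ≤ c p) : v ≤ c q := by
  have hqp : q ≤ p := hp.1 (Set.mem_insert _ _)
  have hrp : r ≤ p := hp.1 (Set.mem_insert_of_mem _ rfl)
  have hsup : c r ≤ c p ∧ c q ≤ c p ∧ ∀ u ∈ Z, c r ≤ u → c q ≤ u → c p ≤ u :=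
    ⟨cover_mono hc hrp, cover_mono hc hqp,
      fun u hu hru hqu => cover_le_of_isLUB hc hp hu hqu hru⟩
  exact (hzm y hy z hz hyz (c r) (hc r).1 (c q) (hc q).1 (cover_le hc hy hry)
    (cover_le hc hz hqz) (c p) (hc p).1 hsup).2 v hv hvz hvp

end Cover

theorem stmt8_general {α : Type*} [PartialOrder α] [OrderBot α] (Z : Set α) (c : α → α)
    (hc : ∀ p, c p ∈ Z ∧ IsGLB {z | z ∈ Z ∧ p ≤ z} (c p))
    (hcen : SCentral Z Set.univ) (hzm : ZModular Z) :
    ∀ p : α, ∀ z ∈ Z, ∀ w, IsGLB {p, z} w → IsGLB {c p, z} (c w) := by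
  intro p z hz w hw
  obtain ⟨hwp, hwz⟩ := mem_lowerBounds_pair.1 hw.1
  obtain ⟨z', hz', hzz', q, r, hqz, hrz', hp⟩ := hcen p trivial z hz
  have hqw : q ≤ w := hw.2 <| mem_lowerBounds_pair.2 ⟨hp.1 (Set.mem_insert _ _), hqz⟩
  refine ⟨mem_lowerBounds_pair.2 ⟨cover_mono hc hwp, cover_le hc hz hwz⟩, fun v hv => ?_⟩
  obtain ⟨hvp, hvz⟩ := mem_lowerBounds_pair.1 hv
  have hcvq : c v ≤ c q := le_cover_of_isLUB_of_disjoint hc hzm hz' hz hzz'.symm hrz' hqz hp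
    (hc v).1 (cover_le hc hz hvz) (cover_le hc (hc p).1 hvp)
  exact (le_cover hc v).trans (hcvq.trans (cover_mono hc hqw))

/-- If `Z` is a `Z`-modular `P`-central lower complete sublattice of `P`, `p ∈ P`,
`z ∈ Z` and the infimum `p ∧ z` exists in `P`, then `c_Z (p ∧ z) = c_Z p ∧ z`, i.e.
`c_Z (p ∧ z)` is the infimum in `P` of `c_Z p` and `z`. -/
theorem stmt8 {α : Type*} [PartialOrder α] [OrderBot α] (Z : Set α) (c : α → α)
    (hZl : ∀ S ⊆ Z, ∃ i, IsGLB S i ∧ i ∈ Z)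
    (hc : ∀ p, c p ∈ Z ∧ IsGLB {z | z ∈ Z ∧ p ≤ z} (c p))
    (hcen : SCentral Z Set.univ) (hzm : ZModular Z) :
    ∀ p : α, ∀ z ∈ Z, ∀ w, IsGLB {p, z} w → IsGLB {c p, z} (c w) :=
  stmt8_general Z c hc hcen hzm
end

section
/- Let P be a poset with least element 0 and Z ⊆ P. Then the diagonal Δ_Z = {(z,z) : z ∈ Z} is a (P×P)-modular subset of the product poset P×P (ordered componentwise, with least element (0,0)) if and only if Z is a P-modular subset of P. -/
/-- `W` is `Q`-modular: whenever `y, z ∈ W` with `y ∧ z = 0` (i.e. `⊥` is the only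
common lower bound), `p ≤ y`, `q ≤ z` and `p ∨ q` exists in `Q`, then `q` is the
greatest lower bound in `Q` of `z` and `p ∨ q`. -/
def QModular {β : Type*} [PartialOrder β] [OrderBot β] (W : Set β) : Prop :=
  ∀ y ∈ W, ∀ z ∈ W, Disjoint y z →
    ∀ p q s, p ≤ y → q ≤ z → IsLUB {p, q} s → IsGLB {z, s} q

section Prod

variable {α β : Type*} [Preorder α] [Preorder β]

theorem Prod.isLUB_pair_iff {p q s : α × β} :
    IsLUB {p, q} s ↔ IsLUB {p.1, q.1} s.1 ∧ IsLUB {p.2, q.2} s.2 := by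
  simp only [isLUB_prod, Set.image_pair]

theorem Prod.isGLB_pair_iff {p q s : α × β} :
    IsGLB {p, q} s ↔ IsGLB {p.1, q.1} s.1 ∧ IsGLB {p.2, q.2} s.2 := by
  simp only [isGLB_prod, Set.image_pair]

end Prod

namespace QModular

variable {α : Type*} [PartialOrder α] [OrderBot α] {Z : Set α}

theorem of_diagonal (H : QModular ((fun z => (z, z)) '' Z : Set (α × α))) : QModular Z := by
  intro y hy z hz hyz p q s hpy hqz hs
  have hglb := H (y, y) ⟨y, hy, rfl⟩ (z, z) ⟨z, hz, rfl⟩ (Prod.disjoint_iff.2 ⟨hyz, hyz⟩)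
    (p, p) (q, q) (s, s) ⟨hpy, hpy⟩ ⟨hqz, hqz⟩ (Prod.isLUB_pair_iff.2 ⟨hs, hs⟩)
  exact (Prod.isGLB_pair_iff.1 hglb).1

theorem diagonal (H : QModular Z) : QModular ((fun z => (z, z)) '' Z : Set (α × α)) := by
  rintro _ ⟨y, hy, rfl⟩ _ ⟨z, hz, rfl⟩ hyz p q s hpy hqz hs
  have hyz' : Disjoint y z := (Prod.disjoint_iff.1 hyz).1
  obtain ⟨hs₁, hs₂⟩ := Prod.isLUB_pair_iff.1 hs
  exact Prod.isGLB_pair_iff.2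
    ⟨H y hy z hz hyz' _ _ _ hpy.1 hqz.1 hs₁, H y hy z hz hyz' _ _ _ hpy.2 hqz.2 hs₂⟩

end QModular

/-- The diagonal `Δ_Z = {(z, z) : z ∈ Z}` is a `(P × P)`-modular subset of the product
poset `P × P` if and only if `Z` is a `P`-modular subset of `P`. -/
theorem stmt10 {α : Type*} [PartialOrder α] [OrderBot α] (Z : Set α) :
    QModular ((fun z => (z, z)) '' Z : Set (α × α)) ↔ QModular Z :=
  ⟨QModular.of_diagonal, QModular.diagonal⟩
end

section
/- Let P be a poset with least element 0, and let Z ⊆ P be such that for every z ∈ Z there is z⊥ ∈ Z for which z is a central element of P with complement z⊥. Suppose P is Z-complete, and let ≾ be a reflexive Z-complete binary relation on P. Then the set F_≾ of ≾-finite elements is a Z-complete subset of P. -/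
/-- `z` is a central element with complement `z'`: the infima `p ∧ z` and `p ∧ z'`
always exist, and the maps `ψ p = (p ∧ z, p ∧ z')` and `φ (q, r) = q ∨ r` are mutually
inverse (automatically order-) isomorphisms between `P` and `[0, z] × [0, z']`. -/
def IsCentralPair {β : Type*} [PartialOrder β] [OrderBot β] (z z' : β) : Prop :=
  ∃ m m' : β → β,
    (∀ p, IsGLB {p, z} (m p) ∧ IsGLB {p, z'} (m' p)) ∧
    (∀ p, IsLUB {m p, m' p} p) ∧
    (∀ q r, q ≤ z → r ≤ z' → ∃ s, IsLUB {q, r} s ∧ m s = q ∧ m' s = r)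

section ZCompleteHelpers
set_option linter.unusedSectionVars false
variable {α : Type*} [PartialOrder α] [OrderBot α] {z z' : α}

private lemma prodLub' {β : Type*} [PartialOrder β] {a c x : α} {b d y : β}
    (h1 : IsLUB {a, c} x) (h2 : IsLUB {b, d} y) :
    IsLUB ({(a, b), (c, d)} : Set (α × β)) (x, y) := by
  constructor
  · rintro p (rfl | rfl)
    · exact ⟨h1.1 (Set.mem_insert _ _), h2.1 (Set.mem_insert _ _)⟩
    · exact ⟨h1.1 (Set.mem_insert_of_mem _ rfl), h2.1 (Set.mem_insert_of_mem _ rfl)⟩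
  · rintro ⟨u, v⟩ hu
    have hA := hu (Set.mem_insert _ _)
    have hB := hu (Set.mem_insert_of_mem _ rfl)
    exact ⟨h1.2 (by rintro p (rfl|rfl); exacts [hA.1, hB.1]),
           h2.2 (by rintro p (rfl|rfl); exacts [hA.2, hB.2])⟩

private lemma prodDisj' {z w : α} (h : Disjoint z w) :
    Disjoint ((z, z) : α × α) (w, w) := fun _ hx hx' =>
  ⟨h hx.1 hx'.1, h hx.2 hx'.2⟩

variable (m m' : α → α)

private lemma centMono (h1 : ∀ p, IsGLB {p, z} (m p) ∧ IsGLB {p, z'} (m' p))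
    {a b : α} (hab : a ≤ b) : m a ≤ m b :=
  (h1 b).1.2 (by
    rintro x (rfl | rfl)
    · exact le_trans ((h1 a).1.1 (Set.mem_insert _ _)) hab
    · exact (h1 a).1.1 (Set.mem_insert_of_mem _ rfl))

private lemma centMono' (h1 : ∀ p, IsGLB {p, z} (m p) ∧ IsGLB {p, z'} (m' p))
    {a b : α} (hab : a ≤ b) : m' a ≤ m' b :=
  (h1 b).2.2 (by
    rintro x (rfl | rfl)
    · exact le_trans ((h1 a).2.1 (Set.mem_insert _ _)) hab
    · exact (h1 a).2.1 (Set.mem_insert_of_mem _ rfl))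

private lemma centSelf (h1 : ∀ p, IsGLB {p, z} (m p) ∧ IsGLB {p, z'} (m' p))
    {p : α} (hp : p ≤ z) : m p = p :=
  ((h1 p).1.unique (by
    constructor
    · rintro x (rfl | rfl); exacts [le_rfl, hp]
    · intro u hu; exact hu (Set.mem_insert _ _)))

private lemma centBot (h1 : ∀ p, IsGLB {p, z} (m p) ∧ IsGLB {p, z'} (m' p))
    {p y : α} (hp : p ≤ y) (hd : Disjoint y z) : m p = ⊥ :=
  le_bot_iff.mp (hd (le_trans ((h1 p).1.1 (Set.mem_insert _ _)) hp)
    ((h1 p).1.1 (Set.mem_insert_of_mem _ rfl)))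

private lemma centLUB (h1 : ∀ p, IsGLB {p, z} (m p) ∧ IsGLB {p, z'} (m' p))
    (h2 : ∀ p, IsLUB {m p, m' p} p)
    (h3 : ∀ q r, q ≤ z → r ≤ z' → ∃ s, IsLUB {q, r} s ∧ m s = q ∧ m' s = r)
    {S : Set α} {s : α} (hs : IsLUB S s) : IsLUB (m '' S) (m s) := by
  constructor
  · rintro _ ⟨q, hq, rfl⟩
    exact centMono m m' h1 (hs.1 hq)
  · intro u hu
    have hmu : m u ∈ upperBounds (m '' S) := by
      rintro _ ⟨q, hq, rfl⟩
      exact (h1 u).1.2 (by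
        rintro x (rfl | rfl)
        · exact hu ⟨q, hq, rfl⟩
        · exact (h1 q).1.1 (Set.mem_insert_of_mem _ rfl))
    obtain ⟨w, hw, hmw, hm'w⟩ := h3 (m u) (m' s)
      ((h1 u).1.1 (Set.mem_insert_of_mem _ rfl))
      ((h1 s).2.1 (Set.mem_insert_of_mem _ rfl))
    have hsw : s ≤ w := hs.2 (by
      intro q hq
      exact (h2 q).2 (by
        rintro x (rfl | rfl)
        · exact le_trans (hmu ⟨q, hq, rfl⟩) (hw.1 (Set.mem_insert _ _))
        · exact le_trans (centMono' m m' h1 (hs.1 hq)) (hw.1 (Set.mem_insert_of_mem _ rfl))))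
    calc m s ≤ m w := centMono m m' h1 hsw
    _ = m u := hmw
    _ ≤ u := (h1 u).1.1 (Set.mem_insert _ _)

private lemma centDisj (h1 : ∀ p, IsGLB {p, z} (m p) ∧ IsGLB {p, z'} (m' p))
    (h3 : ∀ q r, q ≤ z → r ≤ z' → ∃ s, IsLUB {q, r} s ∧ m s = q ∧ m' s = r) :
    Disjoint z z' := by
  obtain ⟨w, hw, hmw, hm'w⟩ := h3 ⊥ z' bot_le le_rfl
  intro x hx hx'
  have hxw : x ≤ w := le_trans hx' (hw.1 (Set.mem_insert_of_mem _ rfl))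
  have : x ≤ m w := (h1 w).1.2 (by rintro y (rfl | rfl); exacts [hxw, hx])
  rwa [hmw] at this

end ZCompleteHelpers

/-- Let every `z ∈ Z` have a `z⊥ ∈ Z` making `z` central with complement `z⊥`, let `P`
be `Z`-complete, and let `R` be a reflexive `Z`-complete relation on `P` (i.e. the set
`{(p, q) : p R q} ⊆ P × P` is `Δ_Z`-complete where `Δ_Z = {(z, z) : z ∈ Z}`).  Then the
set `F_R` of `R`-finite elements (those `p` with `p R q ≤ p ⇒ p = q`) is `Z`-complete. -/
theorem stmt12 {α : Type*} [PartialOrder α] [OrderBot α] (Z : Set α)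
    (hcentral : ∀ z ∈ Z, ∃ z' ∈ Z, IsCentralPair z z')
    (hP : ZComplete Z (Set.univ : Set α))
    (R : α → α → Prop) (hrefl : ∀ p, R p p)
    (hR : ZComplete ((fun z => (z, z)) '' Z : Set (α × α)) {x : α × α | R x.1 x.2}) :
    ZComplete Z {p | ∀ q, R p q → q ≤ p → p = q} := by
  classical
  constructor
  · -- part 1: sups of Z-disjoint families of finite elements are finite
    intro S hSF hSdisj
    obtain ⟨s, hs, -⟩ := hP.1 S (Set.subset_univ S) hSdisj
    refine ⟨s, hs, ?_⟩
    intro t hRst hts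
    have hub : t ∈ upperBounds S := by
      intro p hp
      obtain ⟨f, hf1, hf2⟩ := hSdisj
      obtain ⟨hfZ, hpf⟩ := hf1 p hp
      obtain ⟨z', hz'Z, hcp⟩ := hcentral (f p) hfZ
      obtain ⟨m, m', h1, h2, h3⟩ := hcp
      have hzz' : Disjoint (f p) z' := centDisj m m' h1 h3
      -- m s = p
      have himg : IsLUB (m '' S) p := by
        constructor
        · rintro _ ⟨q, hq, rfl⟩
          by_cases hqp : q = p
          · rw [hqp, centSelf m m' h1 hpf]
          · rw [centBot m m' h1 (hf1 q hq).2 (hf2 q hq p hp hqp)]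
            exact bot_le
        · intro u hu
          have := hu ⟨p, hp, centSelf m m' h1 hpf⟩
          exact this
      have hmsp : m s = p := (centLUB m m' h1 h2 h3 hs).unique himg
      -- decompose (s, t)
      have hlub2 : IsLUB ({(m s, m t), (m' s, m' t)} : Set (α × α)) (s, t) :=
        prodLub' (h2 s) (h2 t)
      have hdisjP : ZDisjoint ((fun z => (z, z)) '' Z)
          ({(m s, m t), (m' s, m' t)} : Set (α × α)) := by
        refine ⟨fun x => if x = (m s, m t) then (f p, f p) else (z', z'), ?_, ?_⟩
        · rintro x (rfl | rfl)
          · dsimp only; rw [if_pos rfl]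
            exact ⟨⟨f p, hfZ, rfl⟩,
              ⟨(h1 s).1.1 (Set.mem_insert_of_mem _ rfl),
               (h1 t).1.1 (Set.mem_insert_of_mem _ rfl)⟩⟩
          · by_cases hx : ((m' s, m' t) : α × α) = (m s, m t)
            · dsimp only; rw [if_pos hx, hx]
              exact ⟨⟨f p, hfZ, rfl⟩,
                ⟨(h1 s).1.1 (Set.mem_insert_of_mem _ rfl),
                 (h1 t).1.1 (Set.mem_insert_of_mem _ rfl)⟩⟩
            · dsimp only; rw [if_neg hx]
              exact ⟨⟨z', hz'Z, rfl⟩,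
                ⟨(h1 s).2.1 (Set.mem_insert_of_mem _ rfl),
                 (h1 t).2.1 (Set.mem_insert_of_mem _ rfl)⟩⟩
        · rintro a (rfl | rfl) b (rfl | rfl) hab
          · exact absurd rfl hab
          · dsimp only; rw [if_pos rfl, if_neg (fun h => hab h.symm)]
            exact prodDisj' hzz'
          · dsimp only; rw [if_pos rfl, if_neg hab]
            exact (prodDisj' hzz').symm
          · exact absurd rfl hab
      have hRmm := hR.2 _ _ _ hdisjP hlub2 hRst
      have hRp : R p (m t) := by
        have := hRmm.1
        rwa [Set.mem_setOf_eq, hmsp] at this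
      have hmt_le : m t ≤ p := hmsp ▸ centMono m m' h1 hts
      have := (hSF hp) (m t) hRp hmt_le
      calc p = m t := this
      _ ≤ t := (h1 t).1.1 (Set.mem_insert _ _)
    exact le_antisymm (hs.2 hub) hts
  · -- part 2
    intro p q s hdisj hlub hsF
    have key : ∀ a b : α, a ≠ b → ZDisjoint Z {a, b} → IsLUB {a, b} s →
        a ∈ {p | ∀ q, R p q → q ≤ p → p = q} := by
      intro a b hab ⟨f, hf1, hf2⟩ hl
      intro t hRat hta
      obtain ⟨haZ, haf⟩ := hf1 a (Set.mem_insert _ _)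
      obtain ⟨hbZ, hbf⟩ := hf1 b (Set.mem_insert_of_mem _ rfl)
      have hdab : Disjoint (f a) (f b) :=
        hf2 a (Set.mem_insert _ _) b (Set.mem_insert_of_mem _ rfl) hab
      obtain ⟨z', hz'Z, hcp⟩ := hcentral (f a) haZ
      obtain ⟨m, m', h1, h2, h3⟩ := hcp
      have hmb : m b = ⊥ := centBot m m' h1 hbf hdab.symm
      have hbz' : b ≤ z' := by
        have hb' : IsLUB {m b, m' b} b := h2 b
        rw [hmb] at hb'
        have : IsLUB ({⊥, m' b} : Set α) (m' b) := by
          constructor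
          · rintro x (rfl | rfl); exacts [bot_le, le_rfl]
          · intro u hu; exact hu (Set.mem_insert_of_mem _ rfl)
        rw [hb'.unique this]
        exact (h1 b).2.1 (Set.mem_insert_of_mem _ rfl)
      obtain ⟨w, hw, hmw, hm'w⟩ := h3 t b (le_trans hta haf) hbz'
      -- the Δ_Z-disjoint pair {(a,t),(b,b)} in R with sup (s,w)
      have hdisjP : ZDisjoint ((fun z => (z, z)) '' Z)
          ({(a, t), (b, b)} : Set (α × α)) := by
        refine ⟨fun x => if x = (a, t) then (f a, f a) else (f b, f b), ?_, ?_⟩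
        · rintro x (rfl | rfl)
          · dsimp only; rw [if_pos rfl]
            exact ⟨⟨f a, haZ, rfl⟩, ⟨haf, le_trans hta haf⟩⟩
          · dsimp only
            rw [if_neg (show ¬((b, b) : α × α) = (a, t) from
              fun h => hab (congrArg Prod.fst h).symm)]
            exact ⟨⟨f b, hbZ, rfl⟩, ⟨hbf, hbf⟩⟩
        · rintro x (rfl | rfl) y (rfl | rfl) hxy
          · exact absurd rfl hxy
          · dsimp only; rw [if_pos rfl, if_neg (fun h => hxy h.symm)]
            exact prodDisj' hdab
          · dsimp only; rw [if_pos rfl, if_neg hxy]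
            exact (prodDisj' hdab).symm
          · exact absurd rfl hxy
      have hsub : ({(a, t), (b, b)} : Set (α × α)) ⊆ {x : α × α | R x.1 x.2} := by
        rintro x (rfl | rfl)
        · exact hRat
        · exact hrefl b
      obtain ⟨s2, hs2, hs2R⟩ := hR.1 _ hsub hdisjP
      have hlubsw : IsLUB ({(a, t), (b, b)} : Set (α × α)) (s, w) :=
        prodLub' hl hw
      have hs2eq : s2 = (s, w) := hs2.unique hlubsw
      have hRsw : R s w := by rw [hs2eq] at hs2R; exact hs2R
      have hws : w ≤ s := hw.2 (by
        rintro x (rfl | rfl)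
        · exact le_trans hta (hl.1 (Set.mem_insert _ _))
        · exact hl.1 (Set.mem_insert_of_mem _ rfl))
      have hsw : s = w := hsF w hRsw hws
      -- m s = a
      have himg : IsLUB (m '' {a, b}) a := by
        constructor
        · rintro _ ⟨x, (rfl | rfl), rfl⟩
          · rw [centSelf m m' h1 haf]
          · rw [hmb]; exact bot_le
        · intro u hu
          exact hu ⟨a, Set.mem_insert _ _, centSelf m m' h1 haf⟩
      have hmsa : m s = a := (centLUB m m' h1 h2 h3 hl).unique himg
      rw [← hmsa, hsw, hmw]
    constructor
    · intro t h1 h2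
      by_cases hpq : p = q
      · have hsp : s = p := hlub.unique (by
          rw [hpq, Set.pair_eq_singleton]; exact isLUB_singleton)
        exact (hsp ▸ hsF) t h1 h2
      · exact key p q hpq hdisj hlub t h1 h2
    · intro t h1 h2
      by_cases hpq : p = q
      · have hsp : s = q := hlub.unique (by
          rw [hpq, Set.pair_eq_singleton]; exact isLUB_singleton)
        exact (hsp ▸ hsF) t h1 h2
      · exact key q p (Ne.symm hpq) (Set.pair_comm p q ▸ hdisj)
          (Set.pair_comm p q ▸ hlub) t h1 h2
end

section
/- Let P be a poset with least element 0, let Z ⊆ P be P-central, and let ≾ be a Z-complete binary relation on P such that the only element p ∈ P with p ≾ 0 is p = 0. Then for all p, q ∈ P, p ≾ q implies p ≾_Z q. -/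
section

variable {α β : Type*} [PartialOrder α] [PartialOrder β] [OrderBot β]

theorem isLUB_pair_bot (a : β) : IsLUB {a, ⊥} a :=
  IsGreatest.isLUB ⟨Set.mem_insert a _, by simp⟩

theorem IsLUB.prod_pair_bot {a b c : α} (h : IsLUB {a, b} c) (d : β) :
    IsLUB {(a, d), (b, ⊥)} (c, d) := by
  rw [isLUB_prod]
  simp only [Set.image_insert_eq, Set.image_singleton]
  exact ⟨h, isLUB_pair_bot d⟩

theorem zDisjoint_pair_s14 {Z : Set β} {a b y z : β} (hy : y ∈ Z) (hz : z ∈ Z)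
    (hyz : Disjoint y z) (hay : a ≤ y) (hbz : b ≤ z) : ZDisjoint Z {a, b} := by
  classical
  refine ⟨fun x => if x = a then y else z, ?_, ?_⟩
  · rintro x (rfl | rfl)
    · simpa using ⟨hy, hay⟩
    · dsimp only
      split_ifs with hxa
      · exact ⟨hy, hxa ▸ hay⟩
      · exact ⟨hz, hbz⟩
  · rintro x (rfl | rfl) w (rfl | rfl) hne
    · exact absurd rfl hne
    · simpa [Ne.symm hne] using hyz
    · simpa [hne] using hyz.symm
    · exact absurd rfl hne

end

/-- If `Z` is `P`-central and `R` is a `Z`-complete relation on `P` (i.e. `Δ_Z`-complete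
as a subset of `P × P`) whose only element related below to `0` is `0`, then `p R q`
implies `p ≾_Z q`, i.e. every `z ∈ Z` above `q` is above `p`. -/
theorem stmt14 {α : Type*} [PartialOrder α] [OrderBot α] (Z : Set α)
    (hcen : SCentral Z Set.univ) (R : α → α → Prop)
    (hR : ZComplete ((fun z => (z, z)) '' Z : Set (α × α)) {x : α × α | R x.1 x.2})
    (h0 : ∀ p, R p ⊥ → p = ⊥) :
    ∀ p q, R p q → ∀ z ∈ Z, q ≤ z → p ≤ z := by
  intro p q hpq z hz hqz
  obtain ⟨z', hz', hzz', q', r, hq'z, hrz', hp⟩ := hcen p (Set.mem_univ p) z hz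
  have hdisj : ZDisjoint ((fun z => (z, z)) '' Z) {(q', q), (r, ⊥)} :=
    zDisjoint_pair_s14 ⟨z, hz, rfl⟩ ⟨z', hz', rfl⟩ (Prod.disjoint_iff.2 ⟨hzz', hzz'⟩)
      ⟨hq'z, hqz⟩ ⟨hrz', bot_le⟩
  have hr : r = ⊥ := h0 r (hR.2 _ _ _ hdisj (hp.prod_pair_bot q) hpq).2
  refine hp.2 ?_
  rintro x (rfl | rfl)
  · exact hq'z
  · exact hr ▸ bot_le
end
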